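/- arXiv:2308.15199 — 3 statements merged into one kernel-verified Lean document; each statement's English description precedes it below -/
import Mathlib

section
/- Let Y be a fractional allocation whose consumption graph is acyclic and in which every split object is split only among agents who all value it positively or all value it negatively. Then the rounding algorithm (iteratively removing a leaf of the forest: if the leaf is an object, assign it fully to its unique neighbor; if the leaf is an agent i with neighbor o, give i's share of o to some other neighbor k with u_{ko} > 0 if one exists, otherwise assign o entirely to i) terminates and outputs a discrete allocation Z with u_i(Z) ≥ u_i(Y) − max_o |u_{io}| for every agent i. -/
/-- `X` is a fractional allocation: nonnegative entries, each object fully allocated. -/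
def IsAlloc (n m : ℕ) (X : Fin n → Fin m → ℝ) : Prop :=
  (∀ i o, 0 ≤ X i o) ∧ ∀ o, ∑ i, X i o = 1

/-- Agent `i`'s additive utility under allocation `X` with utility matrix `U`. -/
def util {n m : ℕ} (U X : Fin n → Fin m → ℝ) (i : Fin n) : ℝ :=
  ∑ o, U i o * X i o

/-- `X` is fractionally Pareto-optimal: no allocation weakly dominates it with one strict gain. -/
def IsFPO (n m : ℕ) (U X : Fin n → Fin m → ℝ) : Prop :=
  ¬ ∃ Y, IsAlloc n m Y ∧ (∀ i, util U X i ≤ util U Y i) ∧ ∃ i, util U X i < util U Y i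

/-- The consumption graph of allocation `X`: bipartite on agents ⊕ objects,
with an edge between agent `i` and object `o` iff `X i o > 0`. -/
def consGraph {n m : ℕ} (X : Fin n → Fin m → ℝ) : SimpleGraph (Fin n ⊕ Fin m) where
  Adj v w :=
    (∃ i o, v = Sum.inl i ∧ w = Sum.inr o ∧ 0 < X i o) ∨
    (∃ i o, v = Sum.inr o ∧ w = Sum.inl i ∧ 0 < X i o)
  symm := by
    constructor
    rintro v w (⟨i, o, rfl, rfl, h⟩ | ⟨i, o, rfl, rfl, h⟩)
    · exact Or.inr ⟨i, o, rfl, rfl, h⟩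
    · exact Or.inl ⟨i, o, rfl, rfl, h⟩
  loopless := by
    constructor
    rintro v (⟨i, o, rfl, h, _⟩ | ⟨i, o, rfl, h, _⟩) <;> simp_all

/-!
Root every tree of the consumption graph. Each agent then has at most one parent object, and all
holders of an object except at most one (its parent, if that is an agent) are children of it.
Give every object to that exceptional holder, or to any holder if there is none, except that a
split object valued negatively by its holders goes to one of its children. An agent then keeps
or gains utility on every object other than its parent object: it receives in full only objects
it held entirely or values positively, and loses shares only of objects it values negatively.
On the parent object it loses at most `|U i o|`.
-/

namespace SimpleGraph

variable {V : Type*} {G : SimpleGraph V}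

theorem IsAcyclic.getVert_one_eq_or (hG : G.IsAcyclic) {v w x : V} (h : G.Adj v w)
    (p : G.Walk v x) (hp : p.IsPath) (q : G.Walk w x) (hq : q.IsPath) :
    p.getVert 1 = w ∨ q.getVert 1 = v := by
  classical
  by_cases hw : w ∈ p.support
  · left
    have hedge : p.takeUntil w hw = Walk.cons h .nil :=
      congrArg Subtype.val ((hG.subsingleton_path v w).elim ⟨_, hp.takeUntil hw⟩ (.singleton h))
    rw [← p.take_spec hw, hedge]
    simp
  · right
    have hback : q = Walk.cons h.symm p :=
      congrArg Subtype.val ((hG.subsingleton_path w x).elim ⟨q, hq⟩ ⟨_, hp.cons hw⟩)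
    simp [hback]

/-- `par v` is the neighbour of `v` towards a chosen root of its component (`v` itself at the
root). -/
theorem IsAcyclic.exists_orientation (hG : G.IsAcyclic) :
    ∃ par : V → V, ∀ v w, G.Adj v w → par v = w ∨ par w = v := by
  classical
  let root : V → V := fun v => (G.connectedComponentMk v).out
  have hpath : ∀ v, ∃ p : G.Walk v (root v), p.IsPath := fun v =>
    let p := (ConnectedComponent.exact (Quot.out_eq (G.connectedComponentMk v))).symm.some.toPath
    ⟨p.1, p.2⟩
  choose path hpath using hpath
  refine ⟨fun v => (path v).getVert 1, fun v w h => ?_⟩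
  have hroot : root w = root v := congrArg Quot.out (ConnectedComponent.sound h.symm.reachable)
  simpa using hG.getVert_one_eq_or h (path v) (hpath v) ((path w).copy rfl hroot)
    (by simpa using hpath w)

end SimpleGraph

theorem Finset.sum_le_of_subsingleton_pos {ι β : Type*} [AddCommMonoid β] [LinearOrder β]
    [IsOrderedAddMonoid β] (s : Finset ι) {f : ι → β} {c : β}
    (hc : 0 ≤ c) (hf : ∀ x, f x ≤ c) (hpos : {x | 0 < f x}.Subsingleton) :
    ∑ x ∈ s, f x ≤ c := by
  classical
  by_cases h : ∃ x ∈ s, 0 < f x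
  · obtain ⟨x, hx, hfx⟩ := h
    have hrest : ∑ y ∈ s.erase x, f y ≤ 0 :=
      Finset.sum_nonpos fun y hy => not_lt.mp fun hfy => (Finset.mem_erase.mp hy).1 (hpos hfy hfx)
    rw [← Finset.add_sum_erase s f hx]
    exact add_le_of_le_of_nonpos (hf x) hrest
  · push Not at h
    exact (Finset.sum_nonpos h).trans hc

section Allocation

variable {n m : ℕ} {U Y : Fin n → Fin m → ℝ}

theorem util_sub_iSup_abs_le {Z : Fin n → Fin m → ℝ} {i : Fin n}
    (hY : ∀ o, Y i o ∈ Set.Icc 0 1) (hZ : ∀ o, Z i o ∈ Set.Icc 0 1)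
    (hloss : {o | U i o * Z i o < U i o * Y i o}.Subsingleton) :
    util U Y i - ⨆ o, |U i o| ≤ util U Z i := by
  have hdiff : util U Y i - util U Z i = ∑ o, U i o * (Y i o - Z i o) := by
    simp only [util, mul_sub, Finset.sum_sub_distrib]
  have hle : ∀ o, U i o * (Y i o - Z i o) ≤ ⨆ o, |U i o| := fun o =>
    calc U i o * (Y i o - Z i o) ≤ |U i o| * |Y i o - Z i o| :=
          (le_abs_self _).trans (abs_mul _ _).le
      _ ≤ |U i o| * 1 := by
        gcongr
        exact abs_sub_le_of_nonneg_of_le (hY o).1 (hY o).2 (hZ o).1 (hZ o).2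
      _ ≤ ⨆ o, |U i o| :=
          (mul_one _).le.trans (le_ciSup (f := fun o => |U i o|) (Set.finite_range _).bddAbove o)
  have hsum := Finset.univ.sum_le_of_subsingleton_pos
    (Real.iSup_nonneg fun o => abs_nonneg (U i o)) hle
    (hloss.anti fun o ho => by simpa [mul_sub] using ho)
  linarith

def IsSplit (Y : Fin n → Fin m → ℝ) (o : Fin m) : Prop :=
  ∃ i j, i ≠ j ∧ 0 < Y i o ∧ 0 < Y j o

def discreteAlloc (a : Fin m → Fin n) : Fin n → Fin m → ℝ :=
  fun i o => if a o = i then 1 else 0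

theorem isAlloc_discreteAlloc (a : Fin m → Fin n) : IsAlloc n m (discreteAlloc a) :=
  ⟨fun i o => by unfold discreteAlloc; positivity, fun o => by simp [discreteAlloc]⟩

theorem discreteAlloc_eq_zero_or_one (a : Fin m → Fin n) (i : Fin n) (o : Fin m) :
    discreteAlloc a i o = 0 ∨ discreteAlloc a i o = 1 := by
  unfold discreteAlloc
  split_ifs <;> simp

namespace IsAlloc

theorem le_one (hY : IsAlloc n m Y) (i : Fin n) (o : Fin m) : Y i o ≤ 1 :=
  (Finset.single_le_sum (fun j _ => hY.1 j o) (Finset.mem_univ i)).trans_eq (hY.2 o)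

theorem exists_pos (hY : IsAlloc n m Y) (o : Fin m) : ∃ i, 0 < Y i o := by
  simpa using Finset.exists_lt_of_sum_lt (s := .univ) (f := fun _ => (0 : ℝ)) (g := (Y · o))
    (by simp [hY.2 o])

theorem eq_one_of_not_isSplit (hY : IsAlloc n m Y) {o : Fin m} (hs : ¬ IsSplit Y o) {k : Fin n}
    (hk : 0 < Y k o) : Y k o = 1 := by
  refine (Finset.sum_eq_single k (fun j _ hjk => ?_) (by simp)).symm.trans (hY.2 o)
  exact le_antisymm (not_lt.mp fun hj => hs ⟨j, k, hjk, hj, hk⟩) (hY.1 j o)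

end IsAlloc

section Orientation

variable {par : Fin n ⊕ Fin m → Fin n ⊕ Fin m}

theorem exists_holder_forall_child
    (hpar : ∀ i o, 0 < Y i o → par (.inl i) = .inr o ∨ par (.inr o) = .inl i)
    (hY : IsAlloc n m Y) (o : Fin m) :
    ∃ k, 0 < Y k o ∧ ∀ i, 0 < Y i o → i ≠ k → par (.inl i) = .inr o := by
  by_cases hparent : ∃ k, 0 < Y k o ∧ par (.inr o) = .inl k
  · obtain ⟨k, hk, hko⟩ := hparent
    exact ⟨k, hk, fun i hi hik =>
      (hpar i o hi).resolve_right fun hio => hik (Sum.inl_injective (hio.symm.trans hko))⟩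
  · obtain ⟨k, hk⟩ := hY.exists_pos o
    exact ⟨k, hk, fun i hi _ => (hpar i o hi).resolve_right fun hio => hparent ⟨i, hi, hio⟩⟩

theorem IsSplit.exists_child
    (hpar : ∀ i o, 0 < Y i o → par (.inl i) = .inr o ∨ par (.inr o) = .inl i)
    {o : Fin m} (hs : IsSplit Y o) : ∃ j, 0 < Y j o ∧ par (.inl j) = .inr o := by
  obtain ⟨i, j, hij, hi, hj⟩ := hs
  rcases hpar i o hi with hio | hoi
  · exact ⟨i, hi, hio⟩
  · exact ⟨j, hj, (hpar j o hj).resolve_right fun hoj =>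
      hij (Sum.inl_injective (hoi.symm.trans hoj))⟩

theorem exists_recipient
    (hpar : ∀ i o, 0 < Y i o → par (.inl i) = .inr o ∨ par (.inr o) = .inl i)
    (hY : IsAlloc n m Y)
    (hsign : ∀ o, IsSplit Y o →
      (∀ i, 0 < Y i o → 0 < U i o) ∨ (∀ i, 0 < Y i o → U i o < 0))
    (o : Fin m) :
    ∃ k, ∀ i, par (.inl i) ≠ .inr o →
      U i o * Y i o ≤ U i o * (if k = i then 1 else 0) := by
  by_cases hneg : IsSplit Y o ∧ ∀ i, 0 < Y i o → U i o < 0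
  · obtain ⟨j, -, hj⟩ := hneg.1.exists_child hpar
    refine ⟨j, fun i hi => ?_⟩
    rw [if_neg (by rintro rfl; exact hi hj), mul_zero]
    rcases (hY.1 i o).eq_or_lt with hzero | hpos
    · rw [← hzero, mul_zero]
    · exact mul_nonpos_of_nonpos_of_nonneg (hneg.2 i hpos).le hpos.le
  · obtain ⟨k, hk, hchild⟩ := exists_holder_forall_child hpar hY o
    refine ⟨k, fun i hi => ?_⟩
    by_cases hki : k = i
    · subst hki
      rw [if_pos rfl, mul_one]
      by_cases hs : IsSplit Y o
      · have hU : 0 < U k o := ((hsign o hs).resolve_right fun h => hneg ⟨hs, h⟩) k hk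
        exact mul_le_of_le_one_right hU.le (hY.le_one k o)
      · rw [hY.eq_one_of_not_isSplit hs hk, mul_one]
    · have hzero : Y i o = 0 :=
        le_antisymm (not_lt.mp fun hpos => hi (hchild i hpos (Ne.symm hki))) (hY.1 i o)
      rw [hzero, if_neg hki]

end Orientation

end Allocation

/-- Rounding: given a fractional allocation with acyclic consumption graph, in which every
split object is valued all-positively or all-negatively by its holders, there is a discrete
allocation in which each agent loses at most the absolute value of one object. -/
theorem rounding_exists (n m : ℕ) (U Y : Fin n → Fin m → ℝ)
    (hY : IsAlloc n m Y)
    (hac : (consGraph Y).IsAcyclic)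
    (hsign : ∀ o : Fin m, (∃ i j, i ≠ j ∧ 0 < Y i o ∧ 0 < Y j o) →
      (∀ i, 0 < Y i o → 0 < U i o) ∨ (∀ i, 0 < Y i o → U i o < 0)) :
    ∃ Z : Fin n → Fin m → ℝ, IsAlloc n m Z ∧ (∀ i o, Z i o = 0 ∨ Z i o = 1) ∧
      ∀ i, util U Y i - (⨆ o, |U i o|) ≤ util U Z i := by
  obtain ⟨par, hpar⟩ := hac.exists_orientation
  have hheld : ∀ i o, 0 < Y i o → par (.inl i) = .inr o ∨ par (.inr o) = .inl i :=
    fun i o h => hpar _ _ (Or.inl ⟨i, o, rfl, rfl, h⟩)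
  choose a ha using exists_recipient hheld hY hsign
  refine ⟨discreteAlloc a, isAlloc_discreteAlloc a, discreteAlloc_eq_zero_or_one a, fun i => ?_⟩
  have hparent : {o | par (.inl i) = .inr o}.Subsingleton :=
    fun o ho o' ho' => Sum.inr_injective (ho.symm.trans ho')
  refine util_sub_iSup_abs_le (fun o => ⟨hY.1 i o, hY.le_one i o⟩)
    (fun o => ⟨(isAlloc_discreteAlloc a).1 i o, (isAlloc_discreteAlloc a).le_one i o⟩)
    (hparent.anti fun o hloss => ?_)
  by_contra hne
  exact (ha o i hne).not_gt hloss
end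

section
/- Let Y be a fractionally Pareto-optimal fractional allocation in which every split object is valued with the same nonzero sign by all its holders, and suppose the consumption graph of Y contains a cycle a₁ − o₁ − ⋯ − a_k − o_k − a₁. Then the product r = ∏_{j=1}^k |u_{a_j, o_{j-1}}| / |u_{a_j, o_j}| equals 1, and the cyclic transfer in either direction (of sufficiently small magnitude) produces an allocation giving every agent exactly the same utility as Y. -/
open Finset Filter Topology

namespace Fin

variable {k : ℕ} [NeZero k]

theorem val_zero_sub_one : ((0 - 1 : Fin k) : ℕ) = k - 1 := by
  rw [Fin.val_sub, Fin.val_one', Fin.val_zero, add_zero]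
  rcases (Nat.one_le_iff_ne_zero.2 (NeZero.ne k)).eq_or_lt with rfl | h
  · simp
  · rw [Nat.mod_eq_of_lt h, Nat.mod_eq_of_lt (by omega)]

theorem zero_ne_one_of_two_le (hk : 2 ≤ k) : (0 : Fin k) ≠ 1 := by
  simp [Fin.ext_iff, Nat.mod_eq_of_lt hk]

theorem prod_Ioc_zero_of_ne_zero {M : Type*} [CommMonoid M] (f : Fin k → M) {t : Fin k}
    (ht : t ≠ 0) : ∏ s ∈ Ioc 0 t, f s = f t * ∏ s ∈ Ioc 0 (t - 1), f s := by
  have hval := Fin.val_sub_one_of_ne_zero ht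
  have hpos : 0 < t.val := Fin.pos_iff_ne_zero.2 ht
  rw [← prod_insert (by simp only [mem_Ioc, Fin.le_def]; omega)]
  congr 1
  ext s
  simp only [mem_Ioc, mem_insert, Fin.le_def, Fin.lt_def, Fin.ext_iff, Fin.val_zero]
  omega

theorem mul_prod_Ioc_zero_zero_sub_one {M : Type*} [CommMonoid M] (f : Fin k → M) :
    f 0 * ∏ s ∈ Ioc 0 (0 - 1 : Fin k), f s = ∏ s, f s := by
  rw [← mul_prod_erase _ f (mem_univ 0)]
  congr 2
  ext s
  have hs : s ≤ 0 - 1 := by rw [Fin.le_def, val_zero_sub_one]; have := s.isLt; omega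
  simp only [mem_Ioc, mem_erase, mem_univ, and_true, hs, Fin.pos_iff_ne_zero]

end Fin

theorem exists_pos_forall_abs_mul_le {ι : Type*} [Finite ι] (P c : ι → ℝ) (hc : ∀ t, 0 < c t) :
    ∃ δ > 0, ∀ ε, |ε| ≤ δ → ∀ t, |ε * P t| ≤ c t := by
  have h : ∀ᶠ ε in 𝓝 (0 : ℝ), ∀ t, |ε * P t| < c t := eventually_all.2 fun t =>
    ContinuousAt.eventually_lt (by fun_prop) continuousAt_const (by simpa using hc t)
  obtain ⟨δ, hδ, hball⟩ := Metric.eventually_nhds_iff.1 h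
  refine ⟨δ / 2, half_pos hδ, fun ε hε t => (hball ?_ t).le⟩
  rw [Real.dist_0_eq_abs]
  linarith

theorem util_add {n m : ℕ} (U X Z : Fin n → Fin m → ℝ) (i : Fin n) :
    util U (X + Z) i = util U X i + util U Z i := by
  simp only [util, Pi.add_apply, mul_add, sum_add_distrib]

section CyclicTransfer

variable {n m k : ℕ} [NeZero k] (a : Fin k → Fin n) (o : Fin k → Fin m)

def cyclicTransfer (d : Fin k → ℝ) (i : Fin n) (p : Fin m) : ℝ :=
  ∑ t, if p = o t then (if i = a t then d t else 0) - (if i = a (t + 1) then d t else 0) else 0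

variable {a o}

theorem sum_cyclicTransfer (d : Fin k → ℝ) (p : Fin m) : ∑ i, cyclicTransfer a o d i p = 0 := by
  unfold cyclicTransfer
  rw [Finset.sum_comm]
  refine sum_eq_zero fun t _ => ?_
  split_ifs <;> simp [sum_sub_distrib]

theorem cyclicTransfer_apply_obj (ho : Function.Injective o) (d : Fin k → ℝ) (i : Fin n)
    (j : Fin k) : cyclicTransfer a o d i (o j) =
      (if i = a j then d j else 0) - (if i = a (j + 1) then d j else 0) := by
  rw [cyclicTransfer, sum_eq_single j (fun t _ htj => if_neg fun h => htj (ho h).symm)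
    (by simp), if_pos rfl]

theorem cyclicTransfer_apply_self (ho : Function.Injective o) (d : Fin k → ℝ) {j : Fin k}
    (hj : a j ≠ a (j + 1)) : cyclicTransfer a o d (a j) (o j) = d j := by
  rw [cyclicTransfer_apply_obj ho, if_pos rfl, if_neg hj, sub_zero]

theorem cyclicTransfer_apply_of_forall_ne {d : Fin k → ℝ} (i : Fin n) {p : Fin m}
    (hp : ∀ t, p ≠ o t) : cyclicTransfer a o d i p = 0 :=
  sum_eq_zero fun t _ => if_neg (hp t)

theorem exists_of_add_cyclicTransfer_ne {Y : Fin n → Fin m → ℝ} {d : Fin k → ℝ} {i : Fin n}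
    {p : Fin m} (h : (Y + cyclicTransfer a o d) i p ≠ Y i p) :
    ∃ j, (i = a j ∨ i = a (j + 1)) ∧ p = o j := by
  have h' : cyclicTransfer a o d i p ≠ 0 := fun h₀ => h (by rw [Pi.add_apply, Pi.add_apply, h₀,
    add_zero])
  obtain ⟨j, -, hj⟩ := exists_ne_zero_of_sum_ne_zero h'
  by_cases hp : p = o j
  · by_cases hi : i = a j
    · exact ⟨j, Or.inl hi, hp⟩
    · by_cases hi' : i = a (j + 1)
      · exact ⟨j, Or.inr hi', hp⟩
      · simp [hp, hi, hi'] at hj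
  · simp [hp] at hj

theorem add_cyclicTransfer_ne_self (Y : Fin n → Fin m → ℝ) (ho : Function.Injective o)
    {d : Fin k → ℝ} {j : Fin k} (hj : a j ≠ a (j + 1)) (hd : d j ≠ 0) :
    Y + cyclicTransfer a o d ≠ Y := fun h => hd <| by
  simpa [cyclicTransfer_apply_self ho d hj] using congrFun (congrFun h (a j)) (o j)

theorem isAlloc_add_cyclicTransfer {Y : Fin n → Fin m → ℝ} (hY : IsAlloc n m Y)
    (ho : Function.Injective o) {d : Fin k → ℝ}
    (hd : ∀ t, |d t| ≤ min (Y (a t) (o t)) (Y (a (t + 1)) (o t))) :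
    IsAlloc n m (Y + cyclicTransfer a o d) := by
  refine ⟨fun i p => ?_, fun p => by simp [sum_add_distrib, hY.2 p, sum_cyclicTransfer]⟩
  rw [Pi.add_apply, Pi.add_apply]
  by_cases hp : ∃ t, p = o t
  · obtain ⟨t, rfl⟩ := hp
    obtain ⟨h₁, h₂⟩ := le_min_iff.1 (hd t)
    have hd₁ := abs_le.1 h₁
    have hd₂ := abs_le.1 h₂
    have hY₀ := hY.1 i (o t)
    rw [cyclicTransfer_apply_obj ho]
    split_ifs <;> subst_vars <;> linarith
  · push Not at hp
    simpa [cyclicTransfer_apply_of_forall_ne i hp] using hY.1 i p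

theorem util_cyclicTransfer_eq_sum (U : Fin n → Fin m → ℝ) (d : Fin k → ℝ) (i : Fin n) :
    util U (cyclicTransfer a o d) i =
      ∑ t, if i = a t then U i (o t) * d t - U i (o (t - 1)) * d (t - 1) else 0 := by
  calc util U (cyclicTransfer a o d) i
      = ∑ t, ((if i = a t then U i (o t) * d t else 0) -
          if i = a (t + 1) then U i (o t) * d t else 0) := by
        simp only [util, cyclicTransfer, mul_sum]
        rw [sum_comm]
        refine sum_congr rfl fun t _ => ?_
        simp only [mul_ite, mul_zero, sum_ite_eq', mem_univ, if_true]
        split_ifs <;> ring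
    _ = ∑ t, (if i = a t then U i (o t) * d t else 0) -
          ∑ t, if i = a t then U i (o (t - 1)) * d (t - 1) else 0 := by
        rw [sum_sub_distrib]
        congr 1
        exact Fintype.sum_equiv (Equiv.addRight 1) _ _ (by simp)
    _ = _ := by
        rw [← sum_sub_distrib]
        refine sum_congr rfl fun t _ => ?_
        split_ifs <;> ring

theorem util_cyclicTransfer_of_balanced (U : Fin n → Fin m → ℝ) {d : Fin k → ℝ}
    (hd : ∀ t ≠ 0, U (a t) (o t) * d t = U (a t) (o (t - 1)) * d (t - 1)) (i : Fin n) :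
    util U (cyclicTransfer a o d) i =
      if i = a 0 then U (a 0) (o 0) * d 0 - U (a 0) (o (0 - 1)) * d (0 - 1) else 0 := by
  rw [util_cyclicTransfer_eq_sum, sum_eq_single 0]
  · split_ifs with hi
    · rw [hi]
    · rfl
  · intro t _ ht
    split_ifs with hi
    · rw [hi, hd t ht, sub_self]
    · rfl
  · simp

end CyclicTransfer

section CycleWeight

variable {n m k : ℕ} [NeZero k] (U : Fin n → Fin m → ℝ) (a : Fin k → Fin n) (o : Fin k → Fin m)

noncomputable def cycleRatio (t : Fin k) : ℝ := U (a t) (o (t - 1)) / U (a t) (o t)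

noncomputable def cycleWeight (t : Fin k) : ℝ := ∏ s ∈ Ioc 0 t, cycleRatio U a o s

theorem cycleWeight_zero : cycleWeight U a o 0 = 1 := by
  simp [cycleWeight]

variable {U a o}

theorem mul_cycleWeight_of_ne_zero {t : Fin k} (hU : U (a t) (o t) ≠ 0) (ht : t ≠ 0) :
    U (a t) (o t) * cycleWeight U a o t = U (a t) (o (t - 1)) * cycleWeight U a o (t - 1) := by
  rw [cycleWeight, Fin.prod_Ioc_zero_of_ne_zero _ ht, ← mul_assoc,
    cycleRatio, mul_div_cancel₀ _ hU, cycleWeight]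

theorem mul_cycleWeight_zero_sub (hU : U (a 0) (o 0) ≠ 0) :
    U (a 0) (o 0) * cycleWeight U a o 0 - U (a 0) (o (0 - 1)) * cycleWeight U a o (0 - 1) =
      U (a 0) (o 0) * (1 - ∏ t, cycleRatio U a o t) := by
  have hratio : U (a 0) (o (0 - 1)) = U (a 0) (o 0) * cycleRatio U a o 0 := by
    rw [cycleRatio, mul_div_cancel₀ _ hU]
  rw [cycleWeight_zero, hratio, cycleWeight, mul_assoc, Fin.mul_prod_Ioc_zero_zero_sub_one]
  ring

theorem util_cyclicTransfer_cycleWeight (hU : ∀ t, U (a t) (o t) ≠ 0) (ε : ℝ) (i : Fin n) :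
    util U (cyclicTransfer a o fun t => ε * cycleWeight U a o t) i =
      if i = a 0 then ε * (U (a 0) (o 0) * (1 - ∏ t, cycleRatio U a o t)) else 0 := by
  rw [util_cyclicTransfer_of_balanced U fun t ht => by
    rw [mul_left_comm, mul_cycleWeight_of_ne_zero (hU t) ht, mul_left_comm]]
  split_ifs
  · rw [← mul_cycleWeight_zero_sub (hU 0)]
    ring
  · rfl

end CycleWeight

/-- If an fPO allocation (with each split object valued with the same nonzero sign by all
its holders) has a cycle in its consumption graph, then the cycle product r equals 1, and a
small cyclic transfer yields a different allocation giving every agent the same utility. -/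
theorem fPO_cycle_product_one (n m : ℕ) (U Y : Fin n → Fin m → ℝ)
    (hY : IsAlloc n m Y) (hfpo : IsFPO n m U Y)
    (k : ℕ) [NeZero k] (hk : 2 ≤ k)
    (a : Fin k → Fin n) (o : Fin k → Fin m)
    (ha : Function.Injective a) (ho : Function.Injective o)
    (hsplit : ∀ j : Fin k, 0 < Y (a j) (o j) ∧ 0 < Y (a (j + 1)) (o j))
    (hsign : ∀ j : Fin k,
      (0 < U (a j) (o j) ∧ 0 < U (a (j + 1)) (o j)) ∨
      (U (a j) (o j) < 0 ∧ U (a (j + 1)) (o j) < 0)) :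
    (∏ j : Fin k, |U (a j) (o (j - 1))| / |U (a j) (o j)|) = 1 ∧
    ∃ Y' : Fin n → Fin m → ℝ, IsAlloc n m Y' ∧ Y' ≠ Y ∧
      (∀ i p, Y' i p ≠ Y i p → ∃ j, (i = a j ∨ i = a (j + 1)) ∧ p = o j) ∧
      ∀ i, util U Y' i = util U Y i := by
  have hU : ∀ j, U (a j) (o j) ≠ 0 := fun j => (hsign j).elim (fun h => h.1.ne') fun h => h.1.ne
  set R := ∏ t, cycleRatio U a o t
  obtain ⟨δ, hδ, hsmall⟩ := exists_pos_forall_abs_mul_le (cycleWeight U a o)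
    (fun t => min (Y (a t) (o t)) (Y (a (t + 1)) (o t))) fun t => lt_min (hsplit t).1 (hsplit t).2
  set Z : ℝ → Fin n → Fin m → ℝ := fun ε => Y + cyclicTransfer a o fun t => ε * cycleWeight U a o t
  have hZ : ∀ ε, |ε| ≤ δ → IsAlloc n m (Z ε) := fun ε hε =>
    isAlloc_add_cyclicTransfer hY ho (hsmall ε hε)
  have hutil : ∀ ε i, util U (Z ε) i =
      util U Y i + if i = a 0 then ε * (U (a 0) (o 0) * (1 - R)) else 0 := fun ε i => by
    rw [util_add, util_cyclicTransfer_cycleWeight hU]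
  have hR : R = 1 := by
    by_contra hR
    have hc : U (a 0) (o 0) * (1 - R) ≠ 0 := mul_ne_zero (hU 0) (sub_ne_zero.2 (Ne.symm hR))
    -- one of the two directions of the transfer is a strict gain for `a 0`
    obtain ⟨ε, hε, hgain⟩ : ∃ ε, |ε| ≤ δ ∧ 0 < ε * (U (a 0) (o 0) * (1 - R)) := by
      rcases hc.lt_or_gt with h | h
      · exact ⟨-δ, by rw [abs_neg, abs_of_pos hδ], by nlinarith⟩
      · exact ⟨δ, (abs_of_pos hδ).le, mul_pos hδ h⟩
    refine hfpo ⟨Z ε, hZ ε hε, fun i => ?_, a 0, ?_⟩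
    · rw [hutil]
      split_ifs <;> linarith
    · rw [hutil, if_pos rfl]
      linarith
  have h₀ : a 0 ≠ a (0 + 1) := by
    rw [zero_add]
    exact ha.ne (Fin.zero_ne_one_of_two_le hk)
  refine ⟨?_, Z δ, hZ δ (abs_of_pos hδ).le, ?_, fun i p => exists_of_add_cyclicTransfer_ne,
    fun i => ?_⟩
  · rw [← abs_one, ← hR, abs_prod]
    simp only [cycleRatio, abs_div]
  · exact add_cyclicTransfer_ne_self Y ho h₀ (by rw [cycleWeight_zero, mul_one]; exact hδ.ne')
  · rw [hutil, hR, sub_self, mul_zero, mul_zero, ite_self, add_zero]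
end

section
/- Let Y be an extreme point (vertex) of the polytope of fractional allocations satisfying u_i(Y) ≥ c_i for all agents i (for given constants c_i), and suppose Y maximizes ∑_i u_i(Y) over this polytope. Then the consumption graph of Y is acyclic. -/
/-!
Suppose the consumption graph has a cycle `I 0, O 0, I 1, O 1, …, I (k-1), O (k-1), I 0`.
For `a : ZMod k → ℝ`, shifting `a t` units of object `O t` from agent `I t` to agent `I (t + 1)`
keeps every object fully allocated, stays inside the support of `Y`, and changes the utility of
agent `I s` by `f a s`, where `f = cycleUtilChange I O U` is linear from `ZMod k → ℝ` to itself.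
If `f` is singular, a nonzero `a` with `f a = 0` gives a direction `δ` such that `Y ± ε δ` are
both feasible with midpoint `Y`, contradicting extremality; otherwise `f a = 1` is solvable and
`Y + ε δ` is a feasible allocation of larger total utility, contradicting maximality.
-/

open Finset Function

theorem LinearMap.exists_ne_zero_forall_nonneg_apply {𝕜 ι : Type*} [Field 𝕜] [LinearOrder 𝕜]
    [IsStrictOrderedRing 𝕜] [Fintype ι] [Nonempty ι] (f : (ι → 𝕜) →ₗ[𝕜] (ι → 𝕜)) :
    ∃ a ≠ 0, ∀ t, 0 ≤ f a t := by
  by_cases hf : Injective f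
  · obtain ⟨a, ha⟩ := LinearMap.injective_iff_surjective.1 hf 1
    refine ⟨a, fun h => ?_, fun t => by simp [ha]⟩
    simpa [h] using congrFun ha (Classical.arbitrary ι)
  · obtain ⟨a, b, hab, hne⟩ := Function.not_injective_iff.1 hf
    exact ⟨a - b, sub_ne_zero.2 hne, fun t => by simp [hab]⟩

theorem exists_pos_forall_mul_abs_le {ι : Type*} [Finite ι] {x y : ι → ℝ}
    (hsupp : ∀ j, y j ≠ 0 → 0 < x j) (hx : 0 ≤ x) : ∃ ε > 0, ∀ j, ε * |y j| ≤ x j := by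
  have hsmall : ∀ j, ∀ᶠ ε in nhdsWithin (0 : ℝ) (Set.Ioi 0), ε * |y j| ≤ x j := by
    intro j
    by_cases hj : y j = 0
    · simpa [hj] using hx j
    · have hcont : Continuous fun ε : ℝ => ε * |y j| := by fun_prop
      exact ((hcont.tendsto' 0 0 (zero_mul _)).mono_left nhdsWithin_le_nhds).eventually
        (ge_mem_nhds (hsupp j hj))
  exact ((Filter.eventually_all.2 hsmall).and self_mem_nhdsWithin).exists.imp
    fun ε h => ⟨h.2, h.1⟩

namespace SimpleGraph

variable {α β : Type*} {G : SimpleGraph (α ⊕ β)}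

theorem Walk.isLeft_getVert_iff_even (hG : ∀ ⦃u v⦄, G.Adj u v → u.isLeft ≠ v.isLeft) {i : α}
    {v : α ⊕ β} (p : G.Walk (.inl i) v) {j : ℕ} (hj : j ≤ p.length) :
    (p.getVert j).isLeft ↔ Even j := by
  induction j with
  | zero => simp
  | succ j ih =>
    have hflip := hG (p.adj_getVert_succ (i := j) (by omega))
    rw [Nat.even_add_one, ← ih (by omega)]
    revert hflip
    cases (p.getVert j).isLeft <;> cases (p.getVert (j + 1)).isLeft <;> simp

theorem exists_isCycle_inl_of_not_isAcyclic (hG : ∀ ⦃u v⦄, G.Adj u v → u.isLeft ≠ v.isLeft)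
    (h : ¬ G.IsAcyclic) : ∃ (i : α) (c : G.Walk (.inl i) (.inl i)), c.IsCycle := by
  classical
  simp only [IsAcyclic, not_forall, not_not] at h
  obtain ⟨v, c, hc⟩ := h
  have rotate_to : ∀ u ∈ c.support, u.isLeft → ∃ (i : α) (c : G.Walk (.inl i) (.inl i)), c.IsCycle
  | .inl i, hu, _ => ⟨i, c.rotate _ hu, hc.rotate hu⟩
  cases hv : v.isLeft
  · refine rotate_to c.snd (c.getVert_mem_support 1) ?_
    simpa [hv] using (hG (c.adj_snd hc.not_nil)).symm
  · exact rotate_to v c.start_mem_support hv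

theorem exists_alternating_cycle_of_not_isAcyclic
    (hG : ∀ ⦃u v⦄, G.Adj u v → u.isLeft ≠ v.isLeft) (h : ¬ G.IsAcyclic) :
    ∃ k, 1 < k ∧ ∃ (I : ZMod k → α) (O : ZMod k → β), Injective I ∧ Injective O ∧
      ∀ t, G.Adj (.inl (I t)) (.inr (O t)) ∧ G.Adj (.inr (O t)) (.inl (I (t + 1))) := by
  obtain ⟨i₀, c, hc⟩ := exists_isCycle_inl_of_not_isAcyclic hG h
  have hL := hc.three_le_length
  obtain ⟨k, hk⟩ : Even c.length :=
    (c.isLeft_getVert_iff_even hG le_rfl).1 (by simp)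
  have : Fact (1 < k) := ⟨by omega⟩
  have hval : ∀ t : ZMod k, 2 * t.val + 1 < c.length := fun t => by
    have := t.val_lt; omega
  have hparity : ∀ j, j < c.length → ((c.getVert j).isLeft ↔ Even j) := fun j hj =>
    c.isLeft_getVert_iff_even hG hj.le
  choose I hI using fun t : ZMod k =>
    Sum.isLeft_iff.1 ((hparity (2 * t.val) (by linarith [hval t])).2 (even_two_mul _))
  choose O hO using fun t : ZMod k => by
    have := mt (hparity (2 * t.val + 1) (hval t)).1 (by simp)
    exact Sum.isRight_iff.1 (by simpa using this)
  have hnext : ∀ t : ZMod k, c.getVert (2 * t.val + 2) = c.getVert (2 * (t + 1).val) := by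
    intro t
    rw [ZMod.val_add, ZMod.val_one]
    rcases Nat.lt_or_ge (t.val + 1) k with hlt | hge
    · rw [Nat.mod_eq_of_lt hlt, mul_add, mul_one]
    · have : t.val + 1 = k := le_antisymm (ZMod.val_lt t) hge
      rw [this, Nat.mod_self, mul_zero, c.getVert_zero, show 2 * t.val + 2 = c.length by omega,
        c.getVert_length]
  have hinj : ∀ j j', j < c.length → j' < c.length → c.getVert j = c.getVert j' → j = j' :=
    fun j j' hj hj' => hc.getVert_injOn' (by simp; omega) (by simp; omega)
  refine ⟨k, Fact.out, I, O, fun t t' h => ?_, fun t t' h => ?_, fun t => ⟨?_, ?_⟩⟩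
  · have := hinj (2 * t.val) (2 * t'.val) (by linarith [hval t]) (by linarith [hval t'])
      (by rw [hI, hI, h])
    exact ZMod.val_injective k (by omega)
  · have := hinj (2 * t.val + 1) (2 * t'.val + 1) (hval t) (hval t') (by rw [hO, hO, h])
    exact ZMod.val_injective k (by omega)
  · simpa [hI, hO] using c.adj_getVert_succ (by linarith [hval t] : 2 * t.val < c.length)
  · simpa [hO, hI, hnext] using c.adj_getVert_succ (hval t)

end SimpleGraph


theorem consGraph_adj_isLeft_ne {n m : ℕ} (Y : Fin n → Fin m → ℝ) ⦃u v : Fin n ⊕ Fin m⦄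
    (h : (consGraph Y).Adj u v) : u.isLeft ≠ v.isLeft := by
  rcases h with ⟨i, o, rfl, rfl, -⟩ | ⟨i, o, rfl, rfl, -⟩ <;> simp

theorem consGraph_adj_inl_inr {n m : ℕ} {Y : Fin n → Fin m → ℝ} {i : Fin n} {o : Fin m} :
    (consGraph Y).Adj (.inl i) (.inr o) ↔ 0 < Y i o := by
  simp [consGraph]

section Allocation

variable {n m : ℕ}

theorem util_add_smul (U X δ : Fin n → Fin m → ℝ) (t : ℝ) (i : Fin n) :
    util U (X + t • δ) i = util U X i + t * util U δ i := by
  simp only [util, Pi.add_apply, Pi.smul_apply, smul_eq_mul, mul_add, sum_add_distrib, mul_sum]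
  congr 1
  exact sum_congr rfl fun o _ => by ring

theorem IsAlloc.add_smul {X δ : Fin n → Fin m → ℝ} (hX : IsAlloc n m X)
    (hcol : ∀ o, ∑ i, δ i o = 0) {t : ℝ} (hnn : ∀ i o, 0 ≤ X i o + t * δ i o) :
    IsAlloc n m (X + t • δ) :=
  ⟨hnn, fun o => by simp [sum_add_distrib, ← mul_sum, hX.2 o, hcol o]⟩

variable {U Y : Fin n → Fin m → ℝ} {c : Fin n → ℝ}

theorem eq_zero_of_util_nonneg (hY : IsAlloc n m Y) (hYc : ∀ i, c i ≤ util U Y i)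
    (hext : ∀ Y₁ Y₂ : Fin n → Fin m → ℝ,
      IsAlloc n m Y₁ → (∀ i, c i ≤ util U Y₁ i) →
      IsAlloc n m Y₂ → (∀ i, c i ≤ util U Y₂ i) →
      Y = (fun i o => (Y₁ i o + Y₂ i o) / 2) → Y₁ = Y₂)
    (hmax : ∀ Y' : Fin n → Fin m → ℝ, IsAlloc n m Y' → (∀ i, c i ≤ util U Y' i) →
      ∑ i, util U Y' i ≤ ∑ i, util U Y i)
    {δ : Fin n → Fin m → ℝ} (hcol : ∀ o, ∑ i, δ i o = 0) (hsupp : ∀ i o, δ i o ≠ 0 → 0 < Y i o)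
    (hδ : ∀ i, 0 ≤ util U δ i) : δ = 0 := by
  obtain ⟨ε, hε, hεδ⟩ := exists_pos_forall_mul_abs_le (x := fun p : Fin n × Fin m => Y p.1 p.2)
    (y := fun p => δ p.1 p.2) (fun p => hsupp p.1 p.2) (fun p => hY.1 p.1 p.2)
  have hfeas : ∀ t, |t| ≤ ε → IsAlloc n m (Y + t • δ) := fun t ht =>
    hY.add_smul hcol fun i o => by
      have hbound : |t * δ i o| ≤ ε * |δ i o| := by
        rw [abs_mul]; exact mul_le_mul_of_nonneg_right ht (abs_nonneg _)
      linarith [hεδ (i, o), neg_abs_le (t * δ i o)]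
  by_cases hflat : ∀ i, util U δ i = 0
  · have hc : ∀ t i, c i ≤ util U (Y + t • δ) i := fun t i => by
      rw [util_add_smul, hflat, mul_zero, add_zero]; exact hYc i
    have hsym := hext _ _ (hfeas ε (abs_of_pos hε).le) (hc ε)
      (hfeas (-ε) (by simp [abs_of_pos hε])) (hc (-ε)) (by funext i o; simp; ring)
    have hεδ0 : ε • δ = 0 := by
      rw [← self_eq_neg, ← neg_smul]; exact add_left_cancel hsym
    exact (smul_eq_zero.1 hεδ0).resolve_left hε.ne'
  · obtain ⟨i₀, hi₀⟩ := not_forall.1 hflat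
    have hc : ∀ i, c i ≤ util U (Y + ε • δ) i := fun i => by
      rw [util_add_smul]; nlinarith [hYc i, hδ i]
    have hle := hmax _ (hfeas ε (abs_of_pos hε).le) hc
    simp only [util_add_smul, sum_add_distrib, ← mul_sum] at hle
    have hgain : 0 < ∑ i, util U δ i :=
      sum_pos' (fun i _ => hδ i) ⟨i₀, mem_univ _, (hδ i₀).lt_of_ne' hi₀⟩
    nlinarith

end Allocation

section CycleShift

variable {n m k : ℕ} (I : ZMod k → Fin n) (O : ZMod k → Fin m)

def cycleUtilChange (U : Fin n → Fin m → ℝ) : (ZMod k → ℝ) →ₗ[ℝ] (ZMod k → ℝ) where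
  toFun a s := U (I s) (O (s - 1)) * a (s - 1) - U (I s) (O s) * a s
  map_add' a b := by funext s; simp only [Pi.add_apply]; ring
  map_smul' r a := by funext s; simp only [Pi.smul_apply, smul_eq_mul, RingHom.id_apply]; ring

variable [NeZero k]

def cycleShift (a : ZMod k → ℝ) (i : Fin n) (o : Fin m) : ℝ :=
  ∑ t, if o = O t then (if i = I (t + 1) then a t else 0) - (if i = I t then a t else 0) else 0

variable {I O}

theorem sum_cycleShift_apply (a : ZMod k → ℝ) (o : Fin m) : ∑ i, cycleShift I O a i o = 0 := by
  simp only [cycleShift]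
  rw [sum_comm]
  refine sum_eq_zero fun t _ => ?_
  split_ifs <;> simp [sum_sub_distrib]

theorem pos_of_cycleShift_ne_zero {Y : Fin n → Fin m → ℝ}
    (hpos : ∀ t, 0 < Y (I t) (O t) ∧ 0 < Y (I (t + 1)) (O t)) {a : ZMod k → ℝ} {i : Fin n}
    {o : Fin m} (h : cycleShift I O a i o ≠ 0) : 0 < Y i o := by
  obtain ⟨t, -, ht⟩ := exists_ne_zero_of_sum_ne_zero h
  by_cases ho : o = O t
  swap
  · simp [ho] at ht
  subst ho
  by_cases h₁ : i = I (t + 1)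
  · exact h₁ ▸ (hpos t).2
  by_cases h₂ : i = I t
  · exact h₂ ▸ (hpos t).1
  simp [h₁, h₂] at ht

theorem cycleShift_apply_self (hI : Injective I) (hO : Injective O) [Fact (1 < k)]
    (a : ZMod k → ℝ) (s : ZMod k) : cycleShift I O a (I s) (O s) = -a s := by
  have hs : I s ≠ I (s + 1) := fun h => one_ne_zero (left_eq_add.1 (hI h))
  rw [cycleShift, sum_eq_single s]
  · simp [hs]
  · intro t _ hts
    simp [hO.ne_iff, Ne.symm hts]
  · simp

theorem cycleShift_ne_zero (hI : Injective I) (hO : Injective O) [Fact (1 < k)]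
    {a : ZMod k → ℝ} (ha : a ≠ 0) : cycleShift I O a ≠ 0 := by
  obtain ⟨s, hs⟩ := Function.ne_iff.1 ha
  intro h
  have := cycleShift_apply_self hI hO a s
  simp_all

theorem util_cycleShift (U : Fin n → Fin m → ℝ) (a : ZMod k → ℝ) (i : Fin n) :
    util U (cycleShift I O a) i =
      ∑ t, (if i = I (t + 1) then U i (O t) * a t else 0) -
        ∑ t, if i = I t then U i (O t) * a t else 0 := by
  simp only [util, cycleShift, mul_sum]
  rw [sum_comm, ← sum_sub_distrib]
  refine sum_congr rfl fun t _ => ?_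
  simp [mul_ite, mul_sub]

theorem util_cycleShift_apply_self (hI : Injective I) (U : Fin n → Fin m → ℝ) (a : ZMod k → ℝ)
    (s : ZMod k) : util U (cycleShift I O a) (I s) = cycleUtilChange I O U a s := by
  have hprev : ∀ t, I s = I (t + 1) ↔ s - 1 = t := fun t => by
    rw [hI.eq_iff, sub_eq_iff_eq_add]
  simp [util_cycleShift, hprev, hI.eq_iff, cycleUtilChange]

theorem util_cycleShift_of_notMem_range (U : Fin n → Fin m → ℝ) (a : ZMod k → ℝ) {i : Fin n}
    (hi : i ∉ Set.range I) : util U (cycleShift I O a) i = 0 := by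
  have hne : ∀ t, i ≠ I t := fun t h => hi ⟨t, h.symm⟩
  simp [util_cycleShift, hne]

theorem util_cycleShift_nonneg (hI : Injective I) (U : Fin n → Fin m → ℝ) {a : ZMod k → ℝ}
    (ha : ∀ s, 0 ≤ cycleUtilChange I O U a s) (i : Fin n) : 0 ≤ util U (cycleShift I O a) i := by
  by_cases hi : i ∈ Set.range I
  · obtain ⟨s, rfl⟩ := hi
    exact util_cycleShift_apply_self hI U a s ▸ ha s
  · exact (util_cycleShift_of_notMem_range U a hi).ge

end CycleShift

/-- An extreme point of the polytope of fractional allocations with utility lower bounds,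
which maximizes the utilitarian sum over that polytope, has an acyclic consumption graph. -/
theorem extreme_point_max_acyclic (n m : ℕ) (U Y : Fin n → Fin m → ℝ) (c : Fin n → ℝ)
    (hY : IsAlloc n m Y) (hYc : ∀ i, c i ≤ util U Y i)
    (hext : ∀ Y₁ Y₂ : Fin n → Fin m → ℝ,
      IsAlloc n m Y₁ → (∀ i, c i ≤ util U Y₁ i) →
      IsAlloc n m Y₂ → (∀ i, c i ≤ util U Y₂ i) →
      Y = (fun i o => (Y₁ i o + Y₂ i o) / 2) → Y₁ = Y₂)
    (hmax : ∀ Y' : Fin n → Fin m → ℝ, IsAlloc n m Y' → (∀ i, c i ≤ util U Y' i) →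
      ∑ i, util U Y' i ≤ ∑ i, util U Y i) :
    (consGraph Y).IsAcyclic := by
  by_contra hcyc
  obtain ⟨k, hk, I, O, hI, hO, hadj⟩ :=
    SimpleGraph.exists_alternating_cycle_of_not_isAcyclic (consGraph_adj_isLeft_ne Y) hcyc
  have : Fact (1 < k) := ⟨hk⟩
  have hpos : ∀ t, 0 < Y (I t) (O t) ∧ 0 < Y (I (t + 1)) (O t) := fun t =>
    ⟨consGraph_adj_inl_inr.1 (hadj t).1, consGraph_adj_inl_inr.1 (hadj t).2.symm⟩
  obtain ⟨a, ha, hfa⟩ := (cycleUtilChange I O U).exists_ne_zero_forall_nonneg_apply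
  exact cycleShift_ne_zero hI hO ha <| eq_zero_of_util_nonneg hY hYc hext hmax
    (sum_cycleShift_apply a) (fun _ _ => pos_of_cycleShift_ne_zero hpos)
    (util_cycleShift_nonneg hI U hfa)
end
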